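/- arXiv:2605.04432 — 9 statements merged into one kernel-verified Lean document; each statement's English description precedes it below -/
import Mathlib

section
/- Let (X,d) be a metric space and let T : X → X be a relaxed asymptotic contraction with bounding functions ψ_n. Fix x₀ ∈ X and set x_k = T^k x₀ and d_k = d(x_k, x_{k+1}). Then for every n ≥ 0 and every m ≥ 1, d_{n+m+1} ≤ ψ_m(max{d_n, d_{n+1}}). -/
open Filter Topology

/-- The four-point minimum `P_T(u,v) = min{d(u,v), d(u,Tv), d(Tu,v), d(Tu,Tv)}`. -/
noncomputable def Pquasi {X : Type*} [MetricSpace X] (T : X → X) (u v : X) : ℝ :=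
  min (min (dist u v) (dist u (T v))) (min (dist (T u) v) (dist (T u) (T v)))

/-- The lower quasi-metric: `L_T(u,v) = P_T(u,v)` if `P_T(u,v) > 0`, and
`L_T(u,v) = d(Tu,Tv)` if `P_T(u,v) = 0`. -/
noncomputable def Lquasi {X : Type*} [MetricSpace X] (T : X → X) (u v : X) : ℝ :=
  if 0 < Pquasi T u v then Pquasi T u v else dist (T u) (T v)

/-- The upper quasi-metric `U_T(u,v) = max{d(u,v), d(Tu,u), d(Tv,v), d(Tu,Tv)}`. -/
noncomputable def Uquasi {X : Type*} [MetricSpace X] (T : X → X) (u v : X) : ℝ :=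
  max (max (dist u v) (dist (T u) u)) (max (dist (T v) v) (dist (T u) (T v)))

/-- A Boyd–Wong function: `ψ : [0,∞) → [0,∞)` (modelled on `ℝ`, with all conditions imposed
on `[0,∞)`) which is nondecreasing, right upper semicontinuous, and satisfies `ψ t < t` for
all `t > 0`. -/
def BoydWong (ψ : ℝ → ℝ) : Prop :=
  (∀ t, 0 ≤ t → 0 ≤ ψ t) ∧ MonotoneOn ψ (Set.Ici 0) ∧
  (∀ t, 0 ≤ t → limsup ψ (𝓝[>] t) ≤ ψ t) ∧
  (∀ t, 0 < t → ψ t < t)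

/-- `T` is a relaxed asymptotic contraction with bounding functions `ψs n` (`n ≥ 1`):
each `ψs n : [0,∞) → [0,∞)` is nondecreasing, the `ψs n` converge uniformly on every
bounded subset of `[0,∞)` to a Boyd–Wong function `ψ`, and
`L_T(T^n u, T^n v) ≤ ψs n (U_T(u,v))` for all `u, v ∈ X` and all `n ≥ 1`. -/
def RACWith {X : Type*} [MetricSpace X] (T : X → X) (ψs : ℕ → ℝ → ℝ) : Prop :=
  (∀ n, 1 ≤ n → (∀ t, 0 ≤ t → 0 ≤ ψs n t) ∧ MonotoneOn (ψs n) (Set.Ici 0)) ∧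
  (∃ ψ : ℝ → ℝ, BoydWong ψ ∧
    ∀ s : Set ℝ, s ⊆ Set.Ici 0 → Bornology.IsBounded s →
      TendstoUniformlyOn ψs ψ atTop s) ∧
  (∀ u v : X, ∀ n, 1 ≤ n → Lquasi T (T^[n] u) (T^[n] v) ≤ ψs n (Uquasi T u v))

/-- `T` is a relaxed asymptotic contraction. -/
def IsRAC {X : Type*} [MetricSpace X] (T : X → X) : Prop :=
  ∃ ψs : ℕ → ℝ → ℝ, RACWith T ψs

/-- For a relaxed asymptotic contraction with bounding functions `ψs`, the adjacent orbit
distances `d_k = d(T^k x₀, T^{k+1} x₀)` satisfy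
`d_{n+m+1} ≤ ψs m (max{d_n, d_{n+1}})` for all `n ≥ 0` and `m ≥ 1`. -/
theorem adjacent_distance_estimate {X : Type*} [MetricSpace X] (T : X → X)
    (ψs : ℕ → ℝ → ℝ) (hT : RACWith T ψs) (x₀ : X) :
    ∀ n : ℕ, ∀ m : ℕ, 1 ≤ m →
      dist (T^[n + m + 1] x₀) (T^[n + m + 2] x₀) ≤
        ψs m (max (dist (T^[n] x₀) (T^[n + 1] x₀))
                  (dist (T^[n + 1] x₀) (T^[n + 2] x₀))) := by
  intro n m hm
  have key := hT.2.2 (T^[n] x₀) (T^[n + 1] x₀) m hm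
  have h1 : T^[m] (T^[n] x₀) = T^[n + m] x₀ := by
    rw [← Function.iterate_add_apply]; ring_nf
  have h2 : T^[m] (T^[n + 1] x₀) = T^[n + m + 1] x₀ := by
    rw [← Function.iterate_add_apply]; ring_nf
  have h3 : ∀ k : ℕ, T (T^[k] x₀) = T^[k + 1] x₀ := by
    intro k; rw [← Function.iterate_succ_apply' T k x₀]
  rw [h1, h2] at key
  have hP : Pquasi T (T^[n + m] x₀) (T^[n + m + 1] x₀) = 0 := by
    have hle : Pquasi T (T^[n + m] x₀) (T^[n + m + 1] x₀) ≤ 0 := by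
      calc Pquasi T (T^[n + m] x₀) (T^[n + m + 1] x₀)
          ≤ dist (T (T^[n + m] x₀)) (T^[n + m + 1] x₀) := by
            unfold Pquasi
            exact le_trans (min_le_right _ _) (min_le_left _ _)
        _ = 0 := by rw [h3, dist_self]
    have hge : 0 ≤ Pquasi T (T^[n + m] x₀) (T^[n + m + 1] x₀) := by
      unfold Pquasi
      positivity
    linarith
  have hL : Lquasi T (T^[n + m] x₀) (T^[n + m + 1] x₀)
      = dist (T^[n + m + 1] x₀) (T^[n + m + 2] x₀) := by
    unfold Lquasi
    rw [hP, if_neg (lt_irrefl 0), h3, h3]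
  have hU : Uquasi T (T^[n] x₀) (T^[n + 1] x₀)
      = max (dist (T^[n] x₀) (T^[n + 1] x₀)) (dist (T^[n + 1] x₀) (T^[n + 2] x₀)) := by
    unfold Uquasi
    rw [h3, h3, dist_comm (T^[n + 1] x₀) (T^[n] x₀), dist_comm (T^[n + 2] x₀) (T^[n + 1] x₀)]
    simp [max_comm, max_assoc, max_left_comm]
  rw [hL, hU] at key
  exact key
end

section
/- Let (X,d) be a nonempty bounded metric space and let T : X → X be a relaxed asymptotic contraction. Then for every x₀ ∈ X, the sequence of adjacent distances d(T^n x₀, T^{n+1} x₀) tends to 0 as n → ∞. -/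
open Filter Topology

/-- In a nonempty bounded metric space, the adjacent orbit distances of a relaxed
asymptotic contraction tend to `0`. -/
theorem adjacent_distances_tendsto_zero {X : Type*} [MetricSpace X] [Nonempty X]
    (hbdd : ∃ D : ℝ, ∀ u v : X, dist u v ≤ D)
    (T : X → X) (hT : IsRAC T) (x₀ : X) :
    Tendsto (fun n : ℕ => dist (T^[n] x₀) (T^[n + 1] x₀)) atTop (𝓝 0) := by

  classical
  obtain ⟨ψs, hmonos, ⟨ψ, ⟨hψ0, hψmono, hψusc, hψlt⟩, hunif⟩, hcontr⟩ := hT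
  obtain ⟨D, hD⟩ := hbdd
  have hD0 : (0:ℝ) ≤ D := le_trans dist_nonneg (hD x₀ x₀)
  set a : ℕ → ℝ := fun m => dist (T^[m] x₀) (T^[m + 1] x₀) with ha
  have ha_nonneg : ∀ m, 0 ≤ a m := fun m => dist_nonneg
  have ha_le : ∀ m, a m ≤ D := fun m => hD _ _
  -- key inequality
  have key : ∀ n k : ℕ, 1 ≤ n →
      a (n + k + 1) ≤ ψs n (max (a k) (a (k + 1))) := by
    intro n k hn
    have h := hcontr (T^[k] x₀) (T^[k + 1] x₀) n hn
    have e1 : T^[n] (T^[k] x₀) = T^[n + k] x₀ :=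
      (Function.iterate_add_apply T n k x₀).symm
    have e2 : T^[n] (T^[k + 1] x₀) = T^[n + k + 1] x₀ :=
      (Function.iterate_add_apply T n (k + 1) x₀).symm
    rw [e1, e2] at h
    have hz : dist (T (T^[n + k] x₀)) (T^[n + k + 1] x₀) = 0 := by
      rw [← Function.iterate_succ_apply' T (n + k) x₀, dist_self]
    have hP : ¬ 0 < Pquasi T (T^[n + k] x₀) (T^[n + k + 1] x₀) := by
      have hle : Pquasi T (T^[n + k] x₀) (T^[n + k + 1] x₀) ≤ 0 := by
        calc Pquasi T (T^[n + k] x₀) (T^[n + k + 1] x₀)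
            ≤ dist (T (T^[n + k] x₀)) (T^[n + k + 1] x₀) :=
              le_trans (min_le_right _ _) (min_le_left _ _)
          _ = 0 := hz
      exact not_lt.mpr hle
    rw [Lquasi, if_neg hP, Function.iterate_succ_apply' T (n + k) x₀,
      ← Function.iterate_succ_apply' T (n + k) x₀] at h
    have hTT : T (T^[n + k + 1] x₀) = T^[n + k + 2] x₀ :=
      (Function.iterate_succ_apply' T (n + k + 1) x₀).symm
    rw [hTT] at h
    have hU : Uquasi T (T^[k] x₀) (T^[k + 1] x₀) = max (a k) (a (k + 1)) := by
      have e3 : T (T^[k] x₀) = T^[k + 1] x₀ :=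
        (Function.iterate_succ_apply' T k x₀).symm
      have e4 : T (T^[k + 1] x₀) = T^[k + 2] x₀ :=
        (Function.iterate_succ_apply' T (k + 1) x₀).symm
      simp only [Uquasi, e3, e4, ha]
      rw [dist_comm (T^[k+1] x₀) (T^[k] x₀), dist_comm (T^[k+2] x₀) (T^[k+1] x₀)]
      simp [max_assoc, max_comm, max_left_comm]
    rw [hU] at h
    exact h
  -- boundedness data for limsup
  have hub : IsBoundedUnder (· ≤ ·) atTop a := ⟨D, Filter.eventually_map.mpr (Filter.Eventually.of_forall ha_le)⟩
  have hlb : IsBoundedUnder (· ≥ ·) atTop a := ⟨0, Filter.eventually_map.mpr (Filter.Eventually.of_forall ha_nonneg)⟩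
  have hcb : IsCoboundedUnder (· ≤ ·) atTop a := hlb.isCoboundedUnder_le
  set L : ℝ := limsup a atTop with hL
  have hL0 : 0 ≤ L := le_limsup_of_frequently_le
    (Filter.Frequently.of_forall ha_nonneg) hub
  rcases eq_or_lt_of_le hL0 with hL0' | hLpos
  · -- L = 0 : conclude tendsto
    rw [show Tendsto (fun n : ℕ => dist (T^[n] x₀) (T^[n + 1] x₀)) atTop (𝓝 0) ↔ Tendsto a atTop (𝓝 0) from Iff.rfl, Metric.tendsto_atTop]
    intro ε hε
    have hlt : limsup a atTop < ε := by rw [← hL, ← hL0']; exact hε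
    have hev : ∀ᶠ n in atTop, a n < ε := eventually_lt_of_limsup_lt hlt hub
    obtain ⟨N, hN⟩ := Filter.eventually_atTop.mp hev
    exact ⟨N, fun n hn => by
      rw [Real.dist_eq, sub_zero, abs_of_nonneg (ha_nonneg n)]
      exact hN n hn⟩
  · -- L > 0 : contradiction
    exfalso
    set c : ℝ := (ψ L + L) / 2 with hc
    have hψLc : ψ L < c := by
      have := hψlt L hLpos; rw [hc]; linarith
    have hcL : c < L := by
      have := hψlt L hLpos; rw [hc]; linarith
    -- right usc gives eventual bound ψ t < c near L from the right
    have hbdψ : IsBoundedUnder (· ≤ ·) (𝓝[>] L) ψ := by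
      refine ⟨ψ (L + 1), Filter.eventually_map.mpr ?_⟩
      have hmem : Set.Ioo L (L + 1) ∈ 𝓝[>] L :=
        Ioo_mem_nhdsGT_of_mem ⟨le_refl L, by linarith⟩
      filter_upwards [hmem] with t ht
      exact hψmono (Set.mem_Ici.mpr (le_of_lt (lt_trans hLpos ht.1))) (Set.mem_Ici.mpr (by linarith)) (le_of_lt ht.2)
    have husc : ∀ᶠ t in 𝓝[>] L, ψ t < c :=
      eventually_lt_of_limsup_lt (lt_of_le_of_lt (hψusc L hL0) hψLc) hbdψ
    obtain ⟨s, hs, hss⟩ := mem_nhdsGT_iff_exists_Ioo_subset.mp husc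
    -- hs : s ∈ Set.Ioi L, hss : Set.Ioo L s ⊆ {t | ψ t < c}
    set B : ℝ := (L + s) / 2 with hB
    have hLB : L < B := by rw [hB]; have := hs; simp only [Set.mem_Ioi] at this; linarith
    have hBs : B < s := by rw [hB]; have := hs; simp only [Set.mem_Ioi] at this; linarith
    have hψub : ∀ t, 0 ≤ t → t < B → ψ t < c := by
      intro t ht htB
      rcases le_or_gt t L with h1 | h1
      · exact lt_of_le_of_lt (hψmono (Set.mem_Ici.mpr ht) (Set.mem_Ici.mpr hL0) h1) hψLc
      · exact hss ⟨h1, lt_trans htB hBs⟩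
    set ε : ℝ := (L - c) / 2 with hε
    have hε0 : 0 < ε := by rw [hε]; linarith
    -- uniform convergence on Icc 0 D
    have huc := hunif (Set.Icc 0 D) Set.Icc_subset_Ici_self (Metric.isBounded_Icc 0 D)
    have huc' := (Metric.tendstoUniformlyOn_iff.mp huc) ε hε0
    obtain ⟨N₁, hN₁⟩ := Filter.eventually_atTop.mp huc'
    -- eventually a k < B
    have hevB : ∀ᶠ k in atTop, a k < B :=
      eventually_lt_of_limsup_lt (by rw [← hL]; exact hLB) hub
    obtain ⟨K, hK⟩ := Filter.eventually_atTop.mp hevB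
    -- eventually a m ≤ c + ε
    have hev2 : ∀ᶠ m in atTop, a m ≤ c + ε := by
      rw [Filter.eventually_atTop]
      refine ⟨max N₁ 1 + K + 1, fun m hm => ?_⟩
      set n : ℕ := m - K - 1 with hn
      have hmn : m = n + K + 1 := by omega
      have hn1 : 1 ≤ n := by omega
      have hnN₁ : N₁ ≤ n := by omega
      set t : ℝ := max (a K) (a (K + 1)) with ht
      have htmem : t ∈ Set.Icc 0 D :=
        ⟨le_max_of_le_left (ha_nonneg K), max_le (ha_le K) (ha_le (K + 1))⟩
      have htB : t < B := max_lt (hK K le_rfl) (hK (K + 1) (by omega))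
      have h1 : a m ≤ ψs n t := by rw [hmn]; exact key n K hn1
      have h2 : dist (ψ t) (ψs n t) < ε := hN₁ n hnN₁ t htmem
      have h3 : ψs n t ≤ ψ t + ε := by
        rw [Real.dist_eq] at h2
        have := abs_lt.mp h2
        linarith [this.1]
      have h4 : ψ t < c := hψub t htmem.1 htB
      linarith
    have : limsup a atTop ≤ c + ε := limsup_le_of_le hcb hev2
    rw [← hL] at this
    have : L ≤ c + ε := this
    rw [hε] at this
    linarith
end

section
/- Let g : [0,∞) → [0,∞) be nondecreasing and right continuous with g(t) < t for all t > 0, and let (a_n) be a bounded sequence of nonnegative real numbers such that for every ε > 0 there exists M ≥ 1 with a_{n+m+1} ≤ g(a_n + 2ε) + 3ε for all n ≥ 0 and all m ≥ M. Then a_n → 0 as n → ∞. -/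
open Filter Topology

/-- If `g : [0,∞) → [0,∞)` is nondecreasing and right continuous with `g(t) < t` for
`t > 0`, and `(a_n)` is a bounded nonnegative sequence such that for every `ε > 0` there
is `M ≥ 1` with `a_{n+m+1} ≤ g(a_n + 2ε) + 3ε` for all `n ≥ 0` and `m ≥ M`,
then `a_n → 0`. -/
theorem tendsto_zero_of_recursive_bound (g : ℝ → ℝ)
    (hg0 : ∀ t, 0 ≤ t → 0 ≤ g t)
    (hgmono : MonotoneOn g (Set.Ici 0))
    (hgrc : ∀ t₀ : ℝ, 0 ≤ t₀ → Tendsto g (𝓝[>] t₀) (𝓝 (g t₀)))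
    (hglt : ∀ t, 0 < t → g t < t)
    (a : ℕ → ℝ) (ha0 : ∀ n, 0 ≤ a n) (habdd : ∃ C : ℝ, ∀ n, a n ≤ C)
    (hrec : ∀ ε : ℝ, 0 < ε → ∃ M : ℕ, 1 ≤ M ∧
      ∀ n : ℕ, ∀ m : ℕ, M ≤ m → a (n + m + 1) ≤ g (a n + 2 * ε) + 3 * ε) :
    Tendsto a atTop (𝓝 0) := by
  obtain ⟨C, hC⟩ := habdd
  have hbdd : IsBoundedUnder (· ≤ ·) atTop a := isBoundedUnder_of ⟨C, hC⟩
  have hbdd' : IsBoundedUnder (· ≥ ·) atTop a := isBoundedUnder_of ⟨0, ha0⟩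
  have hcob : IsCoboundedUnder (· ≤ ·) atTop a := hbdd'.isCoboundedUnder_le
  set L := limsup a atTop with hL
  have hL0 : 0 ≤ L := le_limsup_of_frequently_le
    (Frequently.of_forall ha0) hbdd
  -- key estimate
  have key : ∀ ε : ℝ, 0 < ε → L ≤ g (L + 3 * ε) + 3 * ε := by
    intro ε hε
    obtain ⟨M, hM1, hMrec⟩ := hrec ε hε
    have hlt : L < L + ε := by linarith
    have hev : ∀ᶠ n in atTop, a n < L + ε :=
      eventually_lt_of_limsup_lt hlt hbdd
    obtain ⟨N, hN⟩ := eventually_atTop.mp hev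
    have hev2 : ∀ᶠ k in atTop, a k ≤ g (L + 3 * ε) + 3 * ε := by
      rw [eventually_atTop]
      refine ⟨N + M + 1, fun k hk => ?_⟩
      have hkeq : k = (k - M - 1) + M + 1 := by omega
      have hnN : N ≤ k - M - 1 := by omega
      have h1 : a (k - M - 1) + 2 * ε ≤ L + 3 * ε := by
        have := hN _ hnN; linarith
      have h2 : g (a (k - M - 1) + 2 * ε) ≤ g (L + 3 * ε) := by
        refine hgmono ?_ ?_ h1
        · have := ha0 (k - M - 1); simp [Set.mem_Ici]; linarith
        · simp [Set.mem_Ici]; linarith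
      calc a k = a ((k - M - 1) + M + 1) := by rw [← hkeq]
        _ ≤ g (a (k - M - 1) + 2 * ε) + 3 * ε := hMrec _ M le_rfl
        _ ≤ g (L + 3 * ε) + 3 * ε := by linarith
    exact limsup_le_of_le hcob hev2
  -- conclude L ≤ g L
  have hLgL : L ≤ g L := by
    have htend : Tendsto (fun ε : ℝ => g (L + 3 * ε) + 3 * ε) (𝓝[>] (0:ℝ))
        (𝓝 (g L + 3 * 0)) := by
      have h1 : Tendsto (fun ε : ℝ => L + 3 * ε) (𝓝[>] (0:ℝ)) (𝓝[>] L) := by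
        rw [tendsto_nhdsWithin_iff]
        constructor
        · have : Tendsto (fun ε : ℝ => L + 3 * ε) (𝓝 (0:ℝ)) (𝓝 (L + 3 * 0)) :=
            tendsto_const_nhds.add ((continuous_mul_left 3).tendsto 0)
          simpa using this.mono_left nhdsWithin_le_nhds
        · filter_upwards [self_mem_nhdsWithin] with ε (hε : 0 < ε)
          simp [Set.mem_Ioi]; linarith
      have h2 : Tendsto (fun ε : ℝ => g (L + 3 * ε)) (𝓝[>] (0:ℝ)) (𝓝 (g L)) :=
        (hgrc L hL0).comp h1
      have h3 : Tendsto (fun ε : ℝ => 3 * ε) (𝓝[>] (0:ℝ)) (𝓝 (3 * 0)) := by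
        have : Tendsto (fun ε : ℝ => 3 * ε) (𝓝 (0:ℝ)) (𝓝 (3 * 0)) :=
          (continuous_mul_left 3).tendsto 0
        exact this.mono_left nhdsWithin_le_nhds
      exact h2.add h3
    have := ge_of_tendsto htend (by
      filter_upwards [self_mem_nhdsWithin] with ε (hε : 0 < ε)
      exact key ε hε)
    simpa using this
  have hLle : L ≤ 0 := by
    by_contra h
    push_neg at h
    exact absurd hLgL (not_le.mpr (hglt L h))
  -- conclude tendsto
  rw [Metric.tendsto_atTop]
  intro ε hε
  have : L < ε := lt_of_le_of_lt hLle hε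
  obtain ⟨N, hN⟩ := eventually_atTop.mp (eventually_lt_of_limsup_lt this hbdd)
  refine ⟨N, fun n hn => ?_⟩
  rw [Real.dist_eq, sub_zero, abs_of_nonneg (ha0 n)]
  exact hN n hn
end

section
/- Let (X,d) be a nonempty bounded metric space and let T : X → X be a relaxed asymptotic contraction. Then for every x₀ ∈ X, the orbit (T^n x₀)_{n≥0} is a Cauchy sequence in X. -/
open Filter Topology

/-- Key Boyd–Wong fixed-point lemma: if `c ≤ ψ (t a)` for a sequence `t a ≥ c`
converging to `c ≥ 0`, then `c = 0`. -/
lemma bw_key (ψ : ℝ → ℝ) (hBW : BoydWong ψ) (c : ℝ) (hc : 0 ≤ c)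
    (t : ℕ → ℝ) (htc : ∀ a, c ≤ t a)
    (hlim : Filter.Tendsto t Filter.atTop (𝓝 c))
    (h : ∀ a, c ≤ ψ (t a)) : c = 0 := by
  obtain ⟨hpos, hmono, husc, hlt⟩ := hBW
  by_contra hne
  have hcpos : 0 < c := lt_of_le_of_ne hc (Ne.symm hne)
  by_cases hex : ∃ a, t a = c
  · obtain ⟨a, ha⟩ := hex
    have h1 := h a; rw [ha] at h1
    exact absurd h1 (not_le.2 (hlt c hcpos))
  · push_neg at hex
    have hgt : ∀ a, c < t a := fun a => lt_of_le_of_ne (htc a) (fun e => hex a e.symm)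
    have htendW : Filter.Tendsto t Filter.atTop (𝓝[>] c) :=
      tendsto_nhdsWithin_of_tendsto_nhds_of_eventually_within t hlim
        (Filter.Eventually.of_forall hgt)
    have hfreq : ∃ᶠ y in 𝓝[>] c, c ≤ ψ y := htendW.frequently (Filter.Frequently.of_forall h)
    have hbdd : Filter.IsBoundedUnder (· ≤ ·) (𝓝[>] c) ψ := by
      refine ⟨ψ (t 0), Filter.eventually_map.2 ?_⟩
      filter_upwards [Ioc_mem_nhdsGT_of_mem (⟨le_rfl, hgt 0⟩ : c ∈ Set.Ico c (t 0))] with y hy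
      exact hmono (Set.mem_Ici.2 (hc.trans hy.1.le)) (Set.mem_Ici.2 (hc.trans (htc 0))) hy.2
    have h1 : c ≤ Filter.limsup ψ (𝓝[>] c) := Filter.le_limsup_of_frequently_le hfreq hbdd
    exact absurd (h1.trans (husc c hc)) (not_le.2 (hlt c hcpos))

/-- In a nonempty bounded metric space, every orbit of a relaxed asymptotic contraction
is a Cauchy sequence. -/
theorem orbit_cauchySeq {X : Type*} [MetricSpace X] [Nonempty X]
    (hbdd : ∃ D : ℝ, ∀ u v : X, dist u v ≤ D)
    (T : X → X) (hT : IsRAC T) (x₀ : X) :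
    CauchySeq (fun n : ℕ => T^[n] x₀) := by
  obtain ⟨ψs, hprops, ⟨ψ, hBW, hunif⟩, hL⟩ := hT
  obtain ⟨D, hD⟩ := hbdd
  set x : ℕ → X := fun n => T^[n] x₀ with hxdef
  have hiter : ∀ n k : ℕ, T^[n] (x k) = x (n + k) := fun n k =>
    (Function.iterate_add_apply T n k x₀).symm
  have hTx : ∀ k, T (x k) = x (k + 1) := fun k =>
    (Function.iterate_succ_apply' T k x₀).symm
  have hmono : ∀ n, 1 ≤ n → ∀ a b : ℝ, 0 ≤ a → a ≤ b → ψs n a ≤ ψs n b := fun n hn a b ha hab =>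
    (hprops n hn).2 (Set.mem_Ici.2 ha) (Set.mem_Ici.2 (ha.trans hab)) hab
  have hconv : ∀ t : ℝ, 0 ≤ t → Tendsto (fun n => ψs n t) atTop (𝓝 (ψ t)) := by
    intro t ht
    exact (hunif {t} (Set.singleton_subset_iff.2 (Set.mem_Ici.2 ht))
      Bornology.isBounded_singleton).tendsto_at (Set.mem_singleton t)
  set dd : ℕ → ℝ := fun a => dist (x a) (x (a + 1)) with hdddef
  -- Inequality A : consecutive distances
  have hA : ∀ n a, 1 ≤ n → dd (n + a + 1) ≤ ψs n (max (dd a) (dd (a + 1))) := by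
    intro n a hn
    have h := hL (x a) (x (a + 1)) n hn
    rw [hiter, hiter, show n + (a + 1) = n + a + 1 from by omega] at h
    have hP : Pquasi T (x (n + a)) (x (n + a + 1)) = 0 := by
      have h1 : Pquasi T (x (n + a)) (x (n + a + 1)) ≤ 0 := by
        have hz : dist (T (x (n + a))) (x (n + a + 1)) = 0 := by rw [hTx]; exact dist_self _
        calc Pquasi T (x (n + a)) (x (n + a + 1))
            ≤ min (dist (T (x (n + a))) (x (n + a + 1)))
              (dist (T (x (n + a))) (T (x (n + a + 1)))) := min_le_right _ _
          _ ≤ dist (T (x (n + a))) (x (n + a + 1)) := min_le_left _ _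
          _ = 0 := hz
      have h2 : (0 : ℝ) ≤ Pquasi T (x (n + a)) (x (n + a + 1)) :=
        le_min (le_min dist_nonneg dist_nonneg) (le_min dist_nonneg dist_nonneg)
      linarith
    simp only [Lquasi, hP, lt_irrefl, if_false] at h
    rw [hTx, hTx] at h
    refine le_trans h (hmono n hn _ _ ?_ ?_)
    · exact le_trans dist_nonneg ((le_max_left _ _).trans (le_max_left _ _))
    · simp only [Uquasi, hTx]
      refine max_le (max_le (le_max_left _ _) ?_) (max_le ?_ ?_)
      · rw [dist_comm]; exact le_max_left _ _
      · rw [dist_comm]; exact le_max_right _ _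
      · exact le_max_right _ _
  -- Inequality B : general distances
  have hB : ∀ n a b, 1 ≤ n → dist (x (n + a)) (x (n + b)) ≤
      ψs n (Uquasi T (x a) (x b)) + dd (n + a) + dd (n + b) := by
    intro n a b hn
    have h := hL (x a) (x b) n hn
    rw [hiter, hiter] at h
    have t1 : dist (x (n + a)) (x (n + b)) ≤ dist (x (n + a)) (x (n + b + 1)) + dd (n + b) := by
      calc dist (x (n + a)) (x (n + b))
          ≤ dist (x (n + a)) (x (n + b + 1)) + dist (x (n + b + 1)) (x (n + b)) :=
            dist_triangle _ _ _
        _ = dist (x (n + a)) (x (n + b + 1)) + dd (n + b) := by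
            rw [hdddef]; rw [dist_comm (x (n + b + 1))]
    have t2 : dist (x (n + a)) (x (n + b)) ≤ dd (n + a) + dist (x (n + a + 1)) (x (n + b)) :=
      dist_triangle _ _ _
    have t3 : dist (x (n + a)) (x (n + b)) ≤
        dd (n + a) + dist (x (n + a + 1)) (x (n + b + 1)) + dd (n + b) := by
      calc dist (x (n + a)) (x (n + b))
          ≤ dist (x (n + a)) (x (n + a + 1)) + dist (x (n + a + 1)) (x (n + b + 1)) +
            dist (x (n + b + 1)) (x (n + b)) := dist_triangle4 _ _ _ _
        _ = dd (n + a) + dist (x (n + a + 1)) (x (n + b + 1)) + dd (n + b) := by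
            rw [hdddef]; rw [dist_comm (x (n + b + 1))]
    have hdd1 : (0 : ℝ) ≤ dd (n + a) := dist_nonneg
    have hdd2 : (0 : ℝ) ≤ dd (n + b) := dist_nonneg
    by_cases hP : 0 < Pquasi T (x (n + a)) (x (n + b))
    · simp only [Lquasi] at h
      rw [if_pos hP] at h
      have hmin : dist (x (n + a)) (x (n + b)) - dd (n + a) - dd (n + b) ≤
          Pquasi T (x (n + a)) (x (n + b)) := by
        simp only [Pquasi]
        refine le_min (le_min ?_ ?_) (le_min ?_ ?_)
        · linarith
        · rw [hTx]; linarith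
        · rw [hTx]; linarith
        · rw [hTx, hTx]; linarith
      linarith
    · simp only [Lquasi] at h
      rw [if_neg hP, hTx, hTx] at h
      linarith
  -- Stage 1 : dd tends to 0
  have hsB : ∀ a : ℕ, BddAbove (Set.range fun m => dd (a + m)) := fun a =>
    ⟨D, by rintro _ ⟨m, rfl⟩; exact hD _ _⟩
  set s : ℕ → ℝ := fun a => ⨆ m, dd (a + m) with hsdef
  have hdds : ∀ a m, a ≤ m → dd m ≤ s a := by
    intro a m hm
    have := le_ciSup (hsB a) (m - a)
    rwa [show a + (m - a) = m from by omega] at this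
  have hs0 : ∀ a, 0 ≤ s a := fun a => le_trans dist_nonneg (hdds a a le_rfl)
  have hs_anti : Antitone s := antitone_nat_of_succ_le fun a =>
    ciSup_le fun m => hdds a (a + 1 + m) (by omega)
  have hsbb : BddBelow (Set.range s) := ⟨0, by rintro _ ⟨a, rfl⟩; exact hs0 a⟩
  set c : ℝ := ⨅ a, s a with hcdef
  have hcs : ∀ a, c ≤ s a := fun a => ciInf_le hsbb a
  have hc0 : 0 ≤ c := le_ciInf hs0
  have hslim : Tendsto s atTop (𝓝 c) := tendsto_atTop_ciInf hs_anti hsbb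
  have hcψ : ∀ a, c ≤ ψ (s a) := by
    intro a
    have hstep : ∀ n, 1 ≤ n → s (n + a + 1) ≤ ψs n (s a) := by
      intro n hn
      refine ciSup_le fun m => ?_
      rw [show n + a + 1 + m = n + (a + m) + 1 from by omega]
      calc dd (n + (a + m) + 1) ≤ ψs n (max (dd (a + m)) (dd (a + m + 1))) := hA n (a + m) hn
        _ ≤ ψs n (s a) := hmono n hn _ _ (le_trans dist_nonneg (le_max_left _ _))
            (max_le (hdds a _ (by omega)) (hdds a _ (by omega)))
    refine ge_of_tendsto (hconv (s a) (hs0 a)) (eventually_atTop.2 ⟨1, fun n hn => ?_⟩)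
    exact (hcs (n + a + 1)).trans (hstep n hn)
  have hc_zero : c = 0 := bw_key ψ hBW c hc0 s hcs hslim hcψ
  have hslim0 : Tendsto s atTop (𝓝 0) := hc_zero ▸ hslim
  -- Stage 2 : tail diameters tend to 0
  have hΔB : ∀ N : ℕ, BddAbove (Set.range fun p : ℕ × ℕ =>
      dist (x (N + p.1)) (x (N + p.2))) := fun N =>
    ⟨D, by rintro _ ⟨p, rfl⟩; exact hD _ _⟩
  set Δ : ℕ → ℝ := fun N => ⨆ p : ℕ × ℕ, dist (x (N + p.1)) (x (N + p.2)) with hΔdef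
  have hdistΔ : ∀ N m l, N ≤ m → N ≤ l → dist (x m) (x l) ≤ Δ N := by
    intro N m l hm hl
    have := le_ciSup (hΔB N) ((m - N, l - N) : ℕ × ℕ)
    rwa [show N + (m - N) = m from by omega, show N + (l - N) = l from by omega] at this
  have hΔ0 : ∀ N, 0 ≤ Δ N := fun N => le_trans dist_nonneg (hdistΔ N N N le_rfl le_rfl)
  have hΔanti : Antitone Δ := antitone_nat_of_succ_le fun N =>
    ciSup_le fun p => hdistΔ N (N + 1 + p.1) (N + 1 + p.2) (by omega) (by omega)
  have hΔbb : BddBelow (Set.range Δ) := ⟨0, by rintro _ ⟨N, rfl⟩; exact hΔ0 N⟩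
  set δ : ℝ := ⨅ N, Δ N with hδdef
  have hδle : ∀ N, δ ≤ Δ N := fun N => ciInf_le hΔbb N
  have hδ0 : 0 ≤ δ := le_ciInf hΔ0
  have hΔlim : Tendsto Δ atTop (𝓝 δ) := tendsto_atTop_ciInf hΔanti hΔbb
  have hstep2 : ∀ N n, 1 ≤ n → Δ (n + N) ≤ ψs n (Δ N) + 2 * s (n + N) := by
    intro N n hn
    refine ciSup_le ?_
    rintro ⟨i, j⟩
    have h := hB n (N + i) (N + j) hn
    rw [show n + (N + i) = n + N + i from by omega,
        show n + (N + j) = n + N + j from by omega] at h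
    have hU0 : 0 ≤ Uquasi T (x (N + i)) (x (N + j)) :=
      le_trans dist_nonneg ((le_max_left _ _).trans (le_max_left _ _))
    have hUΔ : Uquasi T (x (N + i)) (x (N + j)) ≤ Δ N := by
      simp only [Uquasi, hTx]
      exact max_le (max_le (hdistΔ N _ _ (by omega) (by omega))
          (hdistΔ N _ _ (by omega) (by omega)))
        (max_le (hdistΔ N _ _ (by omega) (by omega)) (hdistΔ N _ _ (by omega) (by omega)))
    have h2 : ψs n (Uquasi T (x (N + i)) (x (N + j))) ≤ ψs n (Δ N) := hmono n hn _ _ hU0 hUΔ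
    have h3 : dd (n + N + i) ≤ s (n + N) := hdds (n + N) (n + N + i) (by omega)
    have h4 : dd (n + N + j) ≤ s (n + N) := hdds (n + N) (n + N + j) (by omega)
    calc dist (x (n + N + i)) (x (n + N + j)) ≤
        ψs n (Uquasi T (x (N + i)) (x (N + j))) + dd (n + N + i) + dd (n + N + j) := h
      _ ≤ ψs n (Δ N) + 2 * s (n + N) := by linarith
  have hδψ : ∀ N, δ ≤ ψ (Δ N) := by
    intro N
    have hev : ∀ᶠ n in atTop, δ ≤ ψs n (Δ N) + 2 * s (n + N) :=
      eventually_atTop.2 ⟨1, fun n hn => (hδle (n + N)).trans (hstep2 N n hn)⟩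
    have htend : Tendsto (fun n => ψs n (Δ N) + 2 * s (n + N)) atTop (𝓝 (ψ (Δ N) + 2 * 0)) :=
      (hconv (Δ N) (hΔ0 N)).add ((hslim0.comp (tendsto_add_atTop_nat N)).const_mul 2)
    have := ge_of_tendsto htend hev
    linarith
  have hδ_zero : δ = 0 := bw_key ψ hBW δ hδ0 Δ hδle hΔlim hδψ
  exact cauchySeq_of_le_tendsto_0 Δ (fun m l N hm hl => hdistΔ N m l hm hl)
    (hδ_zero ▸ hΔlim)
end

section
/- Let (X,d) be a nonempty bounded complete metric space and let T : X → X be a continuous relaxed asymptotic contraction. Then T has a fixed point in X. -/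
open Filter Topology

lemma Pquasi_nonneg {X : Type*} [MetricSpace X] (T : X → X) (u v : X) :
    0 ≤ Pquasi T u v :=
  le_min (le_min dist_nonneg dist_nonneg) (le_min dist_nonneg dist_nonneg)

lemma Pquasi_le_Lquasi {X : Type*} [MetricSpace X] (T : X → X) (u v : X) :
    Pquasi T u v ≤ Lquasi T u v := by
  unfold Lquasi
  split_ifs with h
  · exact le_rfl
  · exact le_trans (not_lt.1 h) dist_nonneg

lemma dist_le_Pquasi_add {X : Type*} [MetricSpace X] (T : X → X) (u v : X) :
    dist u v ≤ Pquasi T u v + dist (T u) u + dist (T v) v := by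
  have h1 := dist_triangle u (T v) v
  have h2 := dist_triangle u (T u) v
  have h3 : dist u v ≤ dist u (T u) + dist (T u) (T v) + dist (T v) v :=
    dist_triangle4 u (T u) (T v) v
  have h4 : dist u (T u) = dist (T u) u := dist_comm _ _
  have h5 : dist (T v) v = dist v (T v) := dist_comm _ _
  have hP : Pquasi T u v = min (min (dist u v) (dist u (T v))) (min (dist (T u) v) (dist (T u) (T v))) := rfl
  have hp1 : Pquasi T u v ≤ dist u v := le_trans (min_le_left _ _) (min_le_left _ _)
  have := dist_nonneg (x := T u) (y := u)
  have := dist_nonneg (x := T v) (y := v)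
  rcases le_total (min (dist u v) (dist u (T v))) (min (dist (T u) v) (dist (T u) (T v))) with h | h
  · rw [hP, min_eq_left h]
    rcases le_total (dist u v) (dist u (T v)) with h' | h'
    · rw [min_eq_left h']; linarith
    · rw [min_eq_right h']; linarith
  · rw [hP, min_eq_right h]
    rcases le_total (dist (T u) v) (dist (T u) (T v)) with h' | h'
    · rw [min_eq_left h']; linarith
    · rw [min_eq_right h']; linarith

lemma dist_le_Lquasi_add {X : Type*} [MetricSpace X] (T : X → X) (u v : X) :
    dist u v ≤ Lquasi T u v + dist (T u) u + dist (T v) v := by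
  have := dist_le_Pquasi_add T u v
  have := Pquasi_le_Lquasi T u v
  linarith

lemma Lquasi_self {X : Type*} [MetricSpace X] (T : X → X) (w : X) :
    Lquasi T w (T w) = dist (T w) (T (T w)) := by
  have hP : Pquasi T w (T w) ≤ 0 := by
    have : Pquasi T w (T w) ≤ dist (T w) (T w) :=
      le_trans (min_le_right _ _) (min_le_left _ _)
    simpa using this
  unfold Lquasi
  rw [if_neg (by exact not_lt.2 hP)]

lemma Uquasi_nonneg {X : Type*} [MetricSpace X] (T : X → X) (u v : X) :
    0 ≤ Uquasi T u v :=
  le_trans dist_nonneg (le_trans (le_max_left _ _) (le_max_left _ _))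

lemma bw_limit_zero (ψ : ℝ → ℝ) (hψ : BoydWong ψ) (c : ℝ) (hc0 : 0 ≤ c)
    (g : ℕ → ℝ) (hgc : ∀ m, c ≤ g m)
    (hlim : Tendsto g atTop (𝓝 c)) (hle : ∀ m, c ≤ ψ (g m)) : c = 0 := by
  by_contra hne
  have hc : 0 < c := lt_of_le_of_ne hc0 (Ne.symm hne)
  obtain ⟨hpos, hmono, husc, hlt⟩ := hψ
  by_cases hex : ∃ m, g m = c
  · obtain ⟨m, hm⟩ := hex
    have h := hle m
    rw [hm] at h
    exact absurd h (not_le.2 (hlt c hc))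
  · push_neg at hex
    have hgc' : ∀ m, g m ∈ Set.Ioi c := fun m =>
      Set.mem_Ioi.2 (lt_of_le_of_ne (hgc m) (Ne.symm (hex m)))
    have hten : Tendsto g atTop (𝓝[>] c) :=
      tendsto_nhdsWithin_of_tendsto_nhds_of_eventually_within g hlim
        (Eventually.of_forall hgc')
    have key : c ≤ limsup ψ (𝓝[>] c) := by
      rw [Filter.limsup_eq]
      apply le_csInf
      · refine ⟨ψ (c + 1), ?_⟩
        have hmem : Set.Ioc c (c + 1) ∈ 𝓝[>] c :=
          Ioc_mem_nhdsGT_of_mem (by constructor <;> linarith)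
        filter_upwards [hmem] with t ht
        exact hmono (Set.mem_Ici.2 (le_of_lt (lt_of_le_of_lt hc0 ht.1)))
          (Set.mem_Ici.2 (by linarith)) ht.2
      · intro b hb
        have hev : ∀ᶠ m in atTop, ψ (g m) ≤ b := hten.eventually hb
        obtain ⟨m, hm⟩ := hev.exists
        exact (hle m).trans hm
    have hfin := key.trans (husc c hc0)
    exact absurd hfin (not_le.2 (hlt c hc))

/-- A continuous relaxed asymptotic contraction on a nonempty bounded complete metric
space has a fixed point. -/
theorem rac_exists_fixedPoint {X : Type*} [MetricSpace X] [Nonempty X] [CompleteSpace X]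
    (hbdd : ∃ D : ℝ, ∀ u v : X, dist u v ≤ D)
    (T : X → X) (hTc : Continuous T) (hT : IsRAC T) :
    ∃ z : X, T z = z := by
  obtain ⟨ψs, hmono, ⟨ψ, hψBW, hunif⟩, hcontr⟩ := hT
  obtain ⟨D, hD⟩ := hbdd
  set u₀ : X := Classical.arbitrary X with hu₀
  set x : ℕ → X := fun n => T^[n] u₀ with hxdef
  set a : ℕ → ℝ := fun n => dist (x n) (x (n + 1)) with hadef
  have hx : ∀ n k, T^[n] (x k) = x (n + k) := by
    intro n k
    simp only [hxdef]
    exact (Function.iterate_add_apply T n k u₀).symm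
  have hTx : ∀ k, T (x k) = x (k + 1) := by
    intro k
    simp only [hxdef]
    exact (Function.iterate_succ_apply' T k u₀).symm
  -- pointwise convergence of ψs to ψ on [0,∞)
  have hpt : ∀ t : ℝ, 0 ≤ t → Tendsto (fun n => ψs n t) atTop (𝓝 (ψ t)) := by
    intro t ht
    have := hunif {t} (by simpa using ht) Bornology.isBounded_singleton
    exact this.tendsto_at (Set.mem_singleton t)
  -- the sequences E and Dm of sups of tails
  set E : ℕ → ℝ := fun m => ⨆ k : ℕ, a (m + k) with hEdef
  set Dm : ℕ → ℝ := fun m => ⨆ p : ℕ × ℕ, dist (x (m + p.1)) (x (m + p.2)) with hDmdef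
  have hEbdd : ∀ m, BddAbove (Set.range fun k : ℕ => a (m + k)) := by
    intro m
    exact ⟨max D 0, by rintro r ⟨k, rfl⟩; exact le_max_of_le_left (hD _ _)⟩
  have hDbdd : ∀ m, BddAbove (Set.range fun p : ℕ × ℕ => dist (x (m + p.1)) (x (m + p.2))) := by
    intro m
    exact ⟨max D 0, by rintro r ⟨p, rfl⟩; exact le_max_of_le_left (hD _ _)⟩
  have hEle : ∀ m k, a (m + k) ≤ E m := fun m k => le_ciSup (hEbdd m) k
  have hE0 : ∀ m, 0 ≤ E m := fun m => le_trans dist_nonneg (hEle m 0)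
  have hDle : ∀ m k l, m ≤ k → m ≤ l → dist (x k) (x l) ≤ Dm m := by
    intro m k l hk hl
    have := le_ciSup (hDbdd m) ((k - m, l - m) : ℕ × ℕ)
    simpa [Nat.add_sub_cancel' hk, Nat.add_sub_cancel' hl] using this
  have hDm0 : ∀ m, 0 ≤ Dm m := fun m =>
    le_trans dist_nonneg (hDle m m m le_rfl le_rfl)
  have haD : ∀ m k, m ≤ k → a k ≤ Dm m := by
    intro m k hk
    exact hDle m k (k + 1) hk (by omega)
  -- Step A : control of consecutive distances
  have hA : ∀ n j, 1 ≤ n → a (n + j + 1) ≤ ψs n (max (a j) (a (j + 1))) := by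
    intro n j hn
    have hc := hcontr (x j) (x (j + 1)) n hn
    rw [hx n j, hx n (j + 1)] at hc
    have he1 : x (n + (j + 1)) = T (x (n + j)) := by rw [hTx]; ring_nf
    rw [he1, Lquasi_self, hTx, hTx] at hc
    have hL : a (n + j + 1) = dist (x (n + j + 1)) (x (n + j + 1 + 1)) := rfl
    have hU : Uquasi T (x j) (x (j + 1)) ≤ max (a j) (a (j + 1)) := by
      unfold Uquasi
      rw [hTx, hTx]
      apply max_le (max_le _ _) (max_le _ _)
      · exact le_max_left _ _
      · rw [dist_comm]; exact le_max_left _ _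
      · rw [dist_comm]; exact le_max_right _ _
      · exact le_max_right _ _
    have hmax0 : (0 : ℝ) ≤ max (a j) (a (j + 1)) := le_max_of_le_left dist_nonneg
    have hmon := (hmono n hn).2 (Set.mem_Ici.2 (Uquasi_nonneg T (x j) (x (j + 1))))
      (Set.mem_Ici.2 hmax0) hU
    calc a (n + j + 1) = dist (x (n + j + 1)) (x (n + j + 1 + 1)) := rfl
      _ ≤ ψs n (Uquasi T (x j) (x (j + 1))) := by
          convert hc using 3
      _ ≤ ψs n (max (a j) (a (j + 1))) := hmon
  have hA' : ∀ n m, 1 ≤ n → E (n + m + 1) ≤ ψs n (E m) := by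
    intro n m hn
    apply ciSup_le
    intro k
    have h1 : a (n + m + 1 + k) = a (n + (m + k) + 1) := by ring_nf
    rw [h1]
    refine le_trans (hA n (m + k) hn) ?_
    have hmax : max (a (m + k)) (a (m + k + 1)) ≤ E m := by
      apply max_le (hEle m k)
      have := hEle m (k + 1)
      simpa [add_assoc] using this
    have hmax0 : (0 : ℝ) ≤ max (a (m + k)) (a (m + k + 1)) := le_max_of_le_left dist_nonneg
    exact (hmono n hn).2 (Set.mem_Ici.2 hmax0) (Set.mem_Ici.2 (hE0 m)) hmax
  -- E is antitone, converges to its inf, which is 0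
  have hEant : Antitone E := by
    intro m m' hmm
    apply ciSup_le
    intro k
    have h1 : a (m' + k) = a (m + (m' - m + k)) := by congr 1; omega
    rw [h1]
    exact hEle m _
  have hEbbd : BddBelow (Set.range E) := ⟨0, by rintro r ⟨m, rfl⟩; exact hE0 m⟩
  set e : ℝ := ⨅ m, E m with hedef
  have hElim : Tendsto E atTop (𝓝 e) := tendsto_atTop_ciInf hEant hEbbd
  have heE : ∀ m, e ≤ E m := fun m => ciInf_le hEbbd m
  have he0 : 0 ≤ e := le_ciInf hE0
  have he_psi : ∀ m, e ≤ ψ (E m) := by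
    intro m
    have hev : ∀ᶠ n in atTop, e ≤ ψs n (E m) := by
      filter_upwards [eventually_ge_atTop 1] with n hn
      exact (heE (n + m + 1)).trans (hA' n m hn)
    exact ge_of_tendsto (hpt (E m) (hE0 m)) hev
  have heq0 : e = 0 := bw_limit_zero ψ hψBW e he0 E heE hElim he_psi
  rw [heq0] at hElim
  -- Step B : main distance estimate
  have hB : ∀ n p q, 1 ≤ n →
      dist (x (n + p)) (x (n + q)) ≤ ψs n (Uquasi T (x p) (x q)) + a (n + p) + a (n + q) := by
    intro n p q hn
    have hc := hcontr (x p) (x q) n hn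
    rw [hx n p, hx n q] at hc
    have h0 := dist_le_Lquasi_add T (x (n + p)) (x (n + q))
    rw [hTx, hTx] at h0
    have h1 : dist (x (n + p + 1)) (x (n + p)) = a (n + p) := dist_comm _ _
    have h2 : dist (x (n + q + 1)) (x (n + q)) = a (n + q) := dist_comm _ _
    rw [h1, h2] at h0
    linarith
  have hU2 : ∀ m p q, m ≤ p → m ≤ q → Uquasi T (x p) (x q) ≤ Dm m := by
    intro m p q hp hq
    unfold Uquasi
    rw [hTx, hTx]
    apply max_le (max_le _ _) (max_le _ _)
    · exact hDle m p q hp hq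
    · exact hDle m (p + 1) p (by omega) hp
    · exact hDle m (q + 1) q (by omega) hq
    · exact hDle m (p + 1) (q + 1) (by omega) (by omega)
  have hB' : ∀ n m, 1 ≤ n → Dm (n + m) ≤ ψs n (Dm m) + 2 * E (n + m) := by
    intro n m hn
    apply ciSup_le
    rintro ⟨p, q⟩
    have h1 : n + m + p = n + (m + p) := by ring
    have h2 : n + m + q = n + (m + q) := by ring
    have := hB n (m + p) (m + q) hn
    rw [← h1, ← h2] at this
    have hUb := hU2 m (m + p) (m + q) (by omega) (by omega)
    have hmon := (hmono n hn).2 (Set.mem_Ici.2 (Uquasi_nonneg T (x (m + p)) (x (m + q))))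
      (Set.mem_Ici.2 (hDm0 m)) hUb
    have ha1 : a (n + m + p) ≤ E (n + m) := hEle (n + m) p
    have ha2 : a (n + m + q) ≤ E (n + m) := hEle (n + m) q
    show dist (x (n + m + p)) (x (n + m + q)) ≤ ψs n (Dm m) + 2 * E (n + m)
    linarith
  -- Dm converges to its inf c, which is 0
  have hDant : Antitone Dm := by
    intro m m' hmm
    apply ciSup_le
    rintro ⟨p, q⟩
    exact hDle m (m' + p) (m' + q) (by omega) (by omega)
  have hDbbd : BddBelow (Set.range Dm) := ⟨0, by rintro r ⟨m, rfl⟩; exact hDm0 m⟩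
  set c : ℝ := ⨅ m, Dm m with hcdef
  have hDlim : Tendsto Dm atTop (𝓝 c) := tendsto_atTop_ciInf hDant hDbbd
  have hcD : ∀ m, c ≤ Dm m := fun m => ciInf_le hDbbd m
  have hc0 : 0 ≤ c := le_ciInf hDm0
  have hc_psi : ∀ m, c ≤ ψ (Dm m) := by
    intro m
    have htR : Tendsto (fun n => ψs n (Dm m) + 2 * E (n + m)) atTop
        (𝓝 (ψ (Dm m) + 2 * 0)) := by
      exact (hpt (Dm m) (hDm0 m)).add
        ((hElim.comp (tendsto_add_atTop_nat m)).const_mul 2)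
    have hev : ∀ᶠ n in atTop, c ≤ ψs n (Dm m) + 2 * E (n + m) := by
      filter_upwards [eventually_ge_atTop 1] with n hn
      exact (hcD (n + m)).trans (hB' n m hn)
    have := ge_of_tendsto htR hev
    linarith
  have hceq0 : c = 0 := bw_limit_zero ψ hψBW c hc0 Dm hcD hDlim hc_psi
  rw [hceq0] at hDlim
  -- x is Cauchy
  have hcauchy : CauchySeq x := by
    rw [Metric.cauchySeq_iff]
    intro ε hε
    have := (hDlim.eventually (eventually_lt_nhds hε)).exists
    obtain ⟨N, hN⟩ := this
    exact ⟨N, fun k hk l hl => lt_of_le_of_lt (hDle N k l hk hl) hN⟩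
  obtain ⟨z, hz⟩ := cauchySeq_tendsto_of_complete hcauchy
  refine ⟨z, ?_⟩
  have h1 : Tendsto (fun n => x (n + 1)) atTop (𝓝 z) :=
    hz.comp (tendsto_add_atTop_nat 1)
  have h2 : Tendsto (fun n => T (x n)) atTop (𝓝 (T z)) :=
    ((hTc.tendsto z).comp hz)
  have h3 : (fun n => T (x n)) = fun n => x (n + 1) := funext hTx
  rw [h3] at h2
  exact tendsto_nhds_unique h2 h1
end

section
/- Let (X,d) be a metric space and let T : X → X be a relaxed asymptotic contraction. Then T has at most one fixed point: if T z₁ = z₁ and T z₂ = z₂, then z₁ = z₂. -/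
open Filter Topology

/-- A relaxed asymptotic contraction has at most one fixed point. -/
theorem rac_fixedPoint_unique {X : Type*} [MetricSpace X] (T : X → X)
    (hT : IsRAC T) (z₁ z₂ : X) (h₁ : T z₁ = z₁) (h₂ : T z₂ = z₂) :
    z₁ = z₂ := by
  by_contra hne
  obtain ⟨ψs, _, ⟨ψ, hBW, hconv⟩, hcontr⟩ := hT
  set D := dist z₁ z₂ with hD
  have hDpos : 0 < D := dist_pos.2 hne
  have hit : ∀ n, T^[n] z₁ = z₁ := fun n => Function.iterate_fixed h₁ n
  have hit2 : ∀ n, T^[n] z₂ = z₂ := fun n => Function.iterate_fixed h₂ n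
  have hP : Pquasi T z₁ z₂ = D := by
    simp [Pquasi, h₁, h₂, hD]
  have hL : Lquasi T z₁ z₂ = D := by
    rw [Lquasi, hP, if_pos hDpos]
  have hU : Uquasi T z₁ z₂ = D := by
    simp [Uquasi, h₁, h₂, hD, dist_self, le_of_lt hDpos]
  have key : ∀ n, 1 ≤ n → D ≤ ψs n D := by
    intro n hn
    have := hcontr z₁ z₂ n hn
    rwa [hit, hit2, hL, hU] at this
  have hptwise : Tendsto (fun n => ψs n D) atTop (𝓝 (ψ D)) := by
    have := hconv {D} (by simp [hDpos.le]) (Bornology.isBounded_singleton)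
    exact this.tendsto_at (Set.mem_singleton D)
  have hle : D ≤ ψ D :=
    ge_of_tendsto hptwise (eventually_atTop.2 ⟨1, key⟩)
  exact absurd (lt_of_le_of_lt hle (hBW.2.2.2 D hDpos)) (lt_irrefl D)
end

section
/- Let (X,d) be a nonempty bounded complete metric space and let T : X → X be a continuous relaxed asymptotic contraction. Then T has a unique fixed point z ∈ X, and for every x ∈ X the iterates T^n x converge to z as n → ∞. -/
open Filter Topology

/-- Main theorem: a continuous relaxed asymptotic contraction on a nonempty bounded
complete metric space has a unique fixed point `z`, and for every `x` the iterates
`T^n x` converge to `z`. -/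
theorem rac_unique_fixedPoint_and_convergence {X : Type*} [MetricSpace X] [Nonempty X]
    [CompleteSpace X]
    (hbdd : ∃ D : ℝ, ∀ u v : X, dist u v ≤ D)
    (T : X → X) (hTc : Continuous T) (hT : IsRAC T) :
    ∃ z : X, T z = z ∧ (∀ w : X, T w = w → w = z) ∧
      ∀ x : X, Tendsto (fun n : ℕ => T^[n] x) atTop (𝓝 z) := by
  obtain ⟨ψs, hmono, ⟨ψ, hBW, hunif⟩, hcontr⟩ := hT
  obtain ⟨hψ0, hψmono, husc, hψlt⟩ := hBW
  obtain ⟨D0, hD0⟩ := hbdd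
  have hdist : ∀ u v : X, dist u v ≤ max D0 0 := fun u v => le_max_of_le_left (hD0 u v)
  set D := max D0 0 with hDdef
  -- pointwise convergence of ψs to ψ on [0,∞)
  have hpt : ∀ t : ℝ, 0 ≤ t → Tendsto (fun n => ψs n t) atTop (𝓝 (ψ t)) := by
    intro t ht
    exact (hunif {t} (Set.singleton_subset_iff.2 ht) Bornology.isBounded_singleton).tendsto_at rfl
  -- core lemma
  have hcore : ∀ c : ℝ, 0 ≤ c → (∀ δ > 0, ∀ n, 1 ≤ n → c ≤ ψs n (c + δ)) → c = 0 := by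
    intro c hc h
    have h2 : ∀ δ > 0, c ≤ ψ (c + δ) := by
      intro δ hδ
      exact ge_of_tendsto (hpt (c+δ) (by linarith)) (eventually_atTop.2 ⟨1, fun n hn => h δ hδ n hn⟩)
    by_contra h0
    have hcpos : 0 < c := lt_of_le_of_ne hc (Ne.symm h0)
    have hfreq : ∃ᶠ t in 𝓝[>] c, c ≤ ψ t := by
      refine Eventually.frequently ?_
      filter_upwards [self_mem_nhdsWithin] with t ht
      have h3 := h2 (t - c) (sub_pos.2 ht)
      rwa [show c + (t - c) = t by ring] at h3
    have hbd : IsBoundedUnder (· ≤ ·) (𝓝[>] c) ψ := by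
      refine ⟨ψ (c+1), ?_⟩
      rw [eventually_map]
      filter_upwards [Ioo_mem_nhdsGT_of_mem (Set.mem_Ico.2 ⟨le_refl c, lt_add_one c⟩)] with t ht
      exact hψmono (Set.mem_Ici.2 (le_of_lt (lt_of_le_of_lt hc ht.1)))
        (Set.mem_Ici.2 (by linarith)) (le_of_lt ht.2)
    have h4 : c ≤ limsup ψ (𝓝[>] c) := le_limsup_of_frequently_le hfreq hbd
    have h5 := husc c hc
    have h6 := hψlt c hcpos
    linarith
  -- uniqueness of fixed points
  have huniq : ∀ w z : X, T w = w → T z = z → w = z := by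
    intro w z hw hz
    by_contra hne
    have hd : 0 < dist w z := dist_pos.2 hne
    have h1 : ∀ n, 1 ≤ n → dist w z ≤ ψs n (dist w z) := by
      intro n hn
      have hc := hcontr w z n hn
      rw [Function.iterate_fixed hw n, Function.iterate_fixed hz n] at hc
      have hP : Pquasi T w z = dist w z := by simp [Pquasi, hw, hz]
      have hU : Uquasi T w z = dist w z := by
        simp [Uquasi, hw, hz, max_self, max_eq_left dist_nonneg, max_eq_right dist_nonneg]
      simp only [Lquasi] at hc
      rw [hP, hU, if_pos hd] at hc
      exact hc
    have h2 : dist w z ≤ ψ (dist w z) :=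
      ge_of_tendsto (hpt _ dist_nonneg) (eventually_atTop.2 ⟨1, h1⟩)
    exact absurd h2 (not_le.2 (hψlt _ hd))
  -- per-orbit convergence to a fixed point
  have key : ∀ x : X, ∃ z, T z = z ∧ Tendsto (fun n : ℕ => T^[n] x) atTop (𝓝 z) := by
    intro x
    set f : ℕ → X := fun n => T^[n] x with hfdef
    have hstep : ∀ k, T (f k) = f (k+1) := fun k => (Function.iterate_succ_apply' T k x).symm
    have hiter : ∀ n k, T^[n] (f k) = f (n+k) := fun n k => (Function.iterate_add_apply T n k x).symm
    set a : ℕ → ℝ := fun n => dist (f n) (f (n+1)) with haD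
    have ha0 : ∀ k, 0 ≤ a k := fun k => dist_nonneg
    set e : ℕ → ℝ := fun m => ⨆ p : ℕ × ℕ, dist (f (m+p.1)) (f (m+p.2)) with heD
    have hbddE : ∀ m, BddAbove (Set.range fun p : ℕ × ℕ => dist (f (m+p.1)) (f (m+p.2))) :=
      fun m => ⟨D, by rintro r ⟨p, rfl⟩; exact hdist _ _⟩
    have hle : ∀ m i j, dist (f (m+i)) (f (m+j)) ≤ e m := fun m i j => le_ciSup (hbddE m) (i,j)
    have he0 : ∀ m, 0 ≤ e m := fun m => le_trans dist_nonneg (hle m 0 0)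
    have heanti : Antitone e := by
      intro m m' hmm'
      refine ciSup_le fun p => ?_
      have h1 : m' + p.1 = m + (m' - m + p.1) := by omega
      have h2 : m' + p.2 = m + (m' - m + p.2) := by omega
      rw [h1, h2]; exact hle m _ _
    set A : ℕ → ℝ := fun m => ⨆ k, a (m+k) with hAD
    have hbddA : ∀ m, BddAbove (Set.range fun k => a (m+k)) :=
      fun m => ⟨D, by rintro r ⟨k, rfl⟩; exact hdist _ _⟩
    have hleA : ∀ m k, a (m+k) ≤ A m := fun m k => le_ciSup (hbddA m) k
    have hA0 : ∀ m, 0 ≤ A m := fun m => le_trans (ha0 (m+0)) (hleA m 0)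
    -- Inequality I : a (n+(m+1)) ≤ ψs n (max (a m) (a (m+1)))
    have ineqI : ∀ m n, 1 ≤ n → a (n+(m+1)) ≤ ψs n (max (a m) (a (m+1))) := by
      intro m n hn
      have hc := hcontr (f m) (T (f m)) n hn
      rw [hstep m, hiter n m, hiter n (m+1)] at hc
      have h3 : dist (T (f (n+m))) (f (n+(m+1))) = 0 := by
        rw [hstep (n+m)]; exact dist_self _
      have h4 : Pquasi T (f (n+m)) (f (n+(m+1))) ≤ 0 := by
        simp only [Pquasi]
        exact le_trans (min_le_right _ _) (le_trans (min_le_left _ _) (le_of_eq h3))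
      have hL : Lquasi T (f (n+m)) (f (n+(m+1))) = dist (T (f (n+m))) (T (f (n+(m+1)))) := by
        simp only [Lquasi]; rw [if_neg (not_lt.2 h4)]
      rw [hL, hstep (n+m), hstep (n+(m+1))] at hc
      have hU : Uquasi T (f m) (f (m+1)) = max (a m) (a (m+1)) := by
        simp only [Uquasi]
        rw [hstep m, hstep (m+1), dist_comm (f (m+1)) (f m), dist_comm (f (m+1+1)) (f (m+1))]
        rw [max_self, max_self]
      rw [hU] at hc
      exact hc
    -- Inequality II
    have ineqII : ∀ n m i j, 1 ≤ n →
        dist (f (n+(m+i))) (f (n+(m+j))) ≤ ψs n (e m) + a (n+(m+i)) + a (n+(m+j)) := by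
      intro n m i j hn
      have hc := hcontr (f (m+i)) (f (m+j)) n hn
      rw [hiter n (m+i), hiter n (m+j)] at hc
      have hU : Uquasi T (f (m+i)) (f (m+j)) ≤ e m := by
        simp only [Uquasi]
        rw [hstep (m+i), hstep (m+j)]
        exact max_le (max_le (hle m i j) (hle m (i+1) i)) (max_le (hle m (j+1) j) (hle m (i+1) (j+1)))
      have hUnn : 0 ≤ Uquasi T (f (m+i)) (f (m+j)) := by
        simp only [Uquasi]
        exact le_trans dist_nonneg (le_trans (le_max_left _ _) (le_max_left _ _))
      have hP : Pquasi T (f (n+(m+i))) (f (n+(m+j))) ≤ ψs n (e m) := by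
        rcases lt_or_ge 0 (Pquasi T (f (n+(m+i))) (f (n+(m+j)))) with h | h
        · have hL : Lquasi T (f (n+(m+i))) (f (n+(m+j))) = Pquasi T (f (n+(m+i))) (f (n+(m+j))) := by
            simp only [Lquasi]; rw [if_pos h]
          rw [hL] at hc
          exact le_trans hc ((hmono n hn).2 (Set.mem_Ici.2 hUnn) (Set.mem_Ici.2 (he0 m)) hU)
        · exact le_trans h ((hmono n hn).1 _ (he0 m))
      have h4 : dist (f (n+(m+i))) (f (n+(m+j))) - a (n+(m+i)) - a (n+(m+j))
          ≤ Pquasi T (f (n+(m+i))) (f (n+(m+j))) := by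
        simp only [Pquasi, haD]
        rw [hstep (n+(m+i)), hstep (n+(m+j))]
        refine le_min (le_min ?_ ?_) (le_min ?_ ?_)
        · linarith [dist_nonneg (x := f (n+(m+i))) (y := f (n+(m+i)+1)),
            dist_nonneg (x := f (n+(m+j))) (y := f (n+(m+j)+1))]
        · linarith [dist_triangle (f (n+(m+i))) (f (n+(m+j)+1)) (f (n+(m+j))),
            dist_comm (f (n+(m+j)+1)) (f (n+(m+j))),
            dist_nonneg (x := f (n+(m+i))) (y := f (n+(m+i)+1))]
        · linarith [dist_triangle (f (n+(m+i))) (f (n+(m+i)+1)) (f (n+(m+j))),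
            dist_nonneg (x := f (n+(m+j))) (y := f (n+(m+j)+1))]
        · linarith [dist_triangle4 (f (n+(m+i))) (f (n+(m+i)+1)) (f (n+(m+j)+1)) (f (n+(m+j))),
            dist_comm (f (n+(m+j)+1)) (f (n+(m+j)))]
      linarith [h4, hP]
    -- Stage 1: α = 0
    have hbddAr : BddBelow (Set.range A) := ⟨0, by rintro r ⟨m, rfl⟩; exact hA0 m⟩
    set α := ⨅ m, A m with hαD
    have hα0 : 0 ≤ α := le_ciInf hA0
    have hαA : ∀ m, α ≤ A m := fun m => ciInf_le hbddAr m
    have hα : α = 0 := by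
      refine hcore α hα0 ?_
      intro δ hδ n hn
      obtain ⟨m, hm⟩ : ∃ m, A m < α + δ := by
        refine exists_lt_of_ciInf_lt ?_
        rw [← hαD]; linarith
      have h1 : A (n+(m+1)) ≤ ψs n (A m) := by
        refine ciSup_le fun k => ?_
        have h2 : n + (m+1) + k = n + (m+k+1) := by omega
        rw [h2]
        refine le_trans (ineqI (m+k) n hn) ?_
        refine (hmono n hn).2 (Set.mem_Ici.2 (le_max_of_le_left (ha0 _))) (Set.mem_Ici.2 (hA0 m)) ?_
        exact max_le (hleA m k) (hleA m (k+1))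
      have h3 : ψs n (A m) ≤ ψs n (α + δ) :=
        (hmono n hn).2 (Set.mem_Ici.2 (hA0 m)) (Set.mem_Ici.2 (by linarith)) hm.le
      exact le_trans (le_trans (hαA _) h1) h3
    have hatend : ∀ ε > 0, ∃ N, ∀ j ≥ N, a j ≤ ε := by
      intro ε hε
      obtain ⟨m, hm⟩ : ∃ m, A m < ε := by
        refine exists_lt_of_ciInf_lt ?_
        rw [← hαD, hα]; exact hε
      refine ⟨m, fun j hj => ?_⟩
      have h1 : a j = a (m + (j - m)) := by congr 1; omega
      rw [h1]; exact le_trans (hleA m _) hm.le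
    -- Stage 2: ν = 0
    have hbddEr : BddBelow (Set.range e) := ⟨0, by rintro r ⟨m, rfl⟩; exact he0 m⟩
    set ν := ⨅ m, e m with hνD
    have hν0 : 0 ≤ ν := le_ciInf he0
    have hνe : ∀ m, ν ≤ e m := fun m => ciInf_le hbddEr m
    have hν : ν = 0 := by
      refine hcore ν hν0 ?_
      intro δ hδ n hn
      refine le_of_forall_pos_le_add ?_
      intro ε hε
      obtain ⟨m₀, hm₀⟩ : ∃ m, e m < ν + δ := by
        refine exists_lt_of_ciInf_lt ?_
        rw [← hνD]; linarith
      obtain ⟨N, hN⟩ := hatend (ε/2) (by linarith)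
      have hmN : N ≤ max m₀ N := le_max_right _ _
      have hem : e (max m₀ N) ≤ e m₀ := heanti (le_max_left _ _)
      have h2 : e (n + max m₀ N) ≤ ψs n (e (max m₀ N)) + ε := by
        refine ciSup_le fun p => ?_
        have h3 : n + max m₀ N + p.1 = n + (max m₀ N + p.1) := by omega
        have h4 : n + max m₀ N + p.2 = n + (max m₀ N + p.2) := by omega
        rw [h3, h4]
        have h5 : a (n+(max m₀ N+p.1)) ≤ ε/2 := hN _ (by omega)
        have h6 : a (n+(max m₀ N+p.2)) ≤ ε/2 := hN _ (by omega)
        linarith [ineqII n (max m₀ N) p.1 p.2 hn]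
      have h7 : ψs n (e (max m₀ N)) ≤ ψs n (ν + δ) :=
        (hmono n hn).2 (Set.mem_Ici.2 (he0 _)) (Set.mem_Ici.2 (by linarith)) (by linarith)
      linarith [hνe (n + max m₀ N)]
    -- Cauchy and convergence
    have hcauchy : CauchySeq f := by
      refine Metric.cauchySeq_iff.2 fun ε hε => ?_
      obtain ⟨m, hm⟩ : ∃ m, e m < ε := by
        refine exists_lt_of_ciInf_lt ?_
        rw [← hνD, hν]; exact hε
      refine ⟨m, fun j hj l hl => ?_⟩
      have h1 : dist (f j) (f l) = dist (f (m+(j-m))) (f (m+(l-m))) := by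
        congr 2 <;> omega
      rw [h1]
      exact lt_of_le_of_lt (hle m _ _) hm
    obtain ⟨z, hz⟩ := cauchySeq_tendsto_of_complete hcauchy
    have hz1 : Tendsto (fun n => f (n+1)) atTop (𝓝 z) := hz.comp (tendsto_add_atTop_nat 1)
    have hz2 : Tendsto (fun n => T (f n)) atTop (𝓝 (T z)) := (hTc.tendsto z).comp hz
    have hfz : (fun n => T (f n)) = fun n => f (n+1) := funext hstep
    rw [hfz] at hz2
    exact ⟨z, tendsto_nhds_unique hz2 hz1, hz⟩
  obtain ⟨z, hz, hconv⟩ := key (Classical.arbitrary X)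
  refine ⟨z, hz, fun w hw => huniq w z hw hz, fun x => ?_⟩
  obtain ⟨z', hz', hconv'⟩ := key x
  rwa [huniq z' z hz' hz] at hconv'
end

section
/- Let (X,d) be a nonempty bounded complete metric space, let T : X → X be continuous, and suppose there exist nondecreasing functions ψ_n : [0,∞) → [0,∞) converging uniformly on every bounded subset of [0,∞) to a Boyd–Wong function ψ, such that d(T^n x, T^n y) ≤ ψ_n(d(x,y)) for all x, y ∈ X and all n ≥ 1. Then T has a unique fixed point z ∈ X, and for every x ∈ X the iterates T^n x converge to z as n → ∞. -/
open Filter Topology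

lemma kirk_core (ψs : ℕ → ℝ → ℝ)
    (ψ : ℝ → ℝ) (hψ : BoydWong ψ)
    (hconv : ∀ s : Set ℝ, s ⊆ Set.Ici 0 → Bornology.IsBounded s →
      TendstoUniformlyOn ψs ψ atTop s)
    (D : ℝ) (a : ℕ → ℝ) (ha0 : ∀ n, 0 ≤ a n) (haD : ∀ n, a n ≤ D)
    (hrec : ∀ n m, 1 ≤ m → a (n + m) ≤ ψs m (a n)) :
    Tendsto a atTop (𝓝 0) := by
  obtain ⟨hψ0, hψmono, hψusc, hψlt⟩ := hψ
  have hbu : IsBoundedUnder (· ≤ ·) atTop a := isBoundedUnder_of ⟨D, haD⟩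
  have hbl : IsBoundedUnder (· ≥ ·) atTop a := isBoundedUnder_of ⟨0, ha0⟩
  set L := limsup a atTop with hLdef
  have hL0 : 0 ≤ L := le_limsup_of_frequently_le (Frequently.of_forall ha0) hbu
  have key : ∀ s, L < s → L ≤ ψ s := by
    intro s hs
    have hs0 : 0 ≤ s := hL0.trans hs.le
    refine le_of_forall_pos_le_add ?_
    intro ε hε
    have huc := hconv (Set.Icc 0 D) (fun t ht => ht.1) (Metric.isBounded_Icc 0 D)
    rw [Metric.tendstoUniformlyOn_iff] at huc
    obtain ⟨m, hm⟩ := ((huc ε hε).and (eventually_ge_atTop 1)).exists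
    obtain ⟨hmε, hm1⟩ := hm
    have hev : ∀ᶠ n in atTop, a n < s := eventually_lt_of_limsup_lt hs hbu
    obtain ⟨N, hN⟩ := hev.exists_forall_of_atTop
    have hbound : ∀ n, N ≤ n → a (n + m) ≤ ψ s + ε := by
      intro n hn
      have h1 : a (n + m) ≤ ψs m (a n) := hrec n m hm1
      have h2 : dist (ψ (a n)) (ψs m (a n)) < ε := hmε (a n) ⟨ha0 n, haD n⟩
      have h3 : ψ (a n) ≤ ψ s := hψmono (ha0 n) hs0 (hN n hn).le
      rw [Real.dist_eq, abs_lt] at h2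
      linarith
    have hev2 : ∀ᶠ k in atTop, a k ≤ ψ s + ε := by
      filter_upwards [eventually_ge_atTop (N + m)] with k hk
      have : a ((k - m) + m) ≤ ψ s + ε := hbound (k - m) (by omega)
      rwa [Nat.sub_add_cancel (by omega)] at this
    exact limsup_le_of_le hbl.isCoboundedUnder_flip hev2
  have hL : L ≤ 0 := by
    by_contra h
    push_neg at h
    have h1 : ∀ᶠ s in 𝓝[>] L, L ≤ ψ s := by
      filter_upwards [self_mem_nhdsWithin] with s hs using key s hs
    have hbu' : IsBoundedUnder (· ≤ ·) (𝓝[>] L) ψ := by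
      refine ⟨ψ (L + 1), eventually_map.mpr ?_⟩
      have hIoo : Set.Ioo L (L + 1) ∈ 𝓝[>] L :=
        Ioo_mem_nhdsGT_of_mem ⟨le_refl L, by linarith⟩
      filter_upwards [hIoo] with s hs
      exact hψmono (le_of_lt (hL0.trans_lt hs.1)) (by linarith : (0:ℝ) ≤ L + 1) hs.2.le
    have h2 : L ≤ limsup ψ (𝓝[>] L) :=
      le_limsup_of_frequently_le (h1.frequently) hbu'
    exact absurd ((h2.trans (hψusc L hL0)).trans_lt (hψlt L h)) (lt_irrefl L)
  exact tendsto_of_le_liminf_of_limsup_le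
    (le_liminf_of_le hbu.isCoboundedUnder_flip (Eventually.of_forall ha0)) hL hbu hbl

/-- Kirk-type theorem: let `X` be a nonempty bounded complete metric space, `T : X → X`
continuous, and suppose there are nondecreasing functions `ψ_n : [0,∞) → [0,∞)` converging
uniformly on every bounded subset of `[0,∞)` to a Boyd–Wong function `ψ`, with
`d(T^n x, T^n y) ≤ ψ_n(d(x,y))` for all `x, y` and `n ≥ 1`. Then `T` has a unique fixed
point `z` and all iterates converge to `z`. -/
theorem kirk_asymptotic_contraction {X : Type*} [MetricSpace X] [Nonempty X]
    [CompleteSpace X]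
    (hbdd : ∃ D : ℝ, ∀ u v : X, dist u v ≤ D)
    (T : X → X) (hTc : Continuous T)
    (ψs : ℕ → ℝ → ℝ)
    (hψs : ∀ n, 1 ≤ n → (∀ t, 0 ≤ t → 0 ≤ ψs n t) ∧ MonotoneOn (ψs n) (Set.Ici 0))
    (ψ : ℝ → ℝ) (hψ : BoydWong ψ)
    (hconv : ∀ s : Set ℝ, s ⊆ Set.Ici 0 → Bornology.IsBounded s →
      TendstoUniformlyOn ψs ψ atTop s)
    (hcontr : ∀ x y : X, ∀ n : ℕ, 1 ≤ n → dist (T^[n] x) (T^[n] y) ≤ ψs n (dist x y)) :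
    ∃ z : X, T z = z ∧ (∀ w : X, T w = w → w = z) ∧
      ∀ x : X, Tendsto (fun n : ℕ => T^[n] x) atTop (𝓝 z) := by
  obtain ⟨D, hDle⟩ := hbdd
  -- orbits approach each other
  have approach : ∀ x y : X, Tendsto (fun n => dist (T^[n] x) (T^[n] y)) atTop (𝓝 0) := by
    intro x y
    refine kirk_core ψs ψ hψ hconv D _ (fun n => dist_nonneg) (fun n => hDle _ _) ?_
    intro n m hm
    have e1 : T^[n + m] x = T^[m] (T^[n] x) := by
      rw [Nat.add_comm, Function.iterate_add_apply]
    have e2 : T^[n + m] y = T^[m] (T^[n] y) := by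
      rw [Nat.add_comm, Function.iterate_add_apply]
    rw [e1, e2]
    exact hcontr _ _ m hm
  -- the Cauchy argument for a fixed base point
  set x0 : X := Classical.arbitrary X with hx0
  set r : ℕ → ℝ := fun n => ⨆ k, dist (T^[n] x0) (T^[n + k] x0) with hr
  have hbdd : ∀ n, BddAbove (Set.range fun k => dist (T^[n] x0) (T^[n + k] x0)) := by
    intro n
    exact ⟨D, by rintro t ⟨k, rfl⟩; exact hDle _ _⟩
  have hrle : ∀ n k, dist (T^[n] x0) (T^[n + k] x0) ≤ r n := by
    intro n k
    exact le_ciSup (hbdd n) k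
  have hr0 : ∀ n, 0 ≤ r n := fun n => Real.iSup_nonneg fun k => dist_nonneg
  have hrD : ∀ n, r n ≤ D := fun n => ciSup_le fun k => hDle _ _
  have hrrec : ∀ n m, 1 ≤ m → r (n + m) ≤ ψs m (r n) := by
    intro n m hm
    refine ciSup_le fun k => ?_
    have e1 : T^[n + m] x0 = T^[m] (T^[n] x0) := by
      rw [Nat.add_comm, Function.iterate_add_apply]
    have e2 : T^[n + m + k] x0 = T^[m] (T^[n + k] x0) := by
      rw [show n + m + k = m + (n + k) by omega, Function.iterate_add_apply]
    rw [e1, e2]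
    calc dist (T^[m] (T^[n] x0)) (T^[m] (T^[n + k] x0))
        ≤ ψs m (dist (T^[n] x0) (T^[n + k] x0)) := hcontr _ _ m hm
      _ ≤ ψs m (r n) := (hψs m hm).2 dist_nonneg (hr0 n) (hrle n k)
  have hrtend : Tendsto r atTop (𝓝 0) := kirk_core ψs ψ hψ hconv D r hr0 hrD hrrec
  have hdr : ∀ N n, N ≤ n → dist (T^[N] x0) (T^[n] x0) ≤ r N := by
    intro N n hn
    have : T^[n] x0 = T^[N + (n - N)] x0 := by rw [Nat.add_sub_cancel' hn]
    rw [this]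
    exact hrle N (n - N)
  have hcauchy : CauchySeq (fun n => T^[n] x0) := by
    refine cauchySeq_of_le_tendsto_0 (fun N => 2 * r N) (fun n m N hn hm => ?_) ?_
    · calc dist (T^[n] x0) (T^[m] x0)
          ≤ dist (T^[N] x0) (T^[n] x0) + dist (T^[N] x0) (T^[m] x0) :=
            dist_triangle_left _ _ _
        _ ≤ r N + r N := add_le_add (hdr N n hn) (hdr N m hm)
        _ = 2 * r N := by ring
    · simpa using hrtend.const_mul 2
  obtain ⟨z, hz⟩ := cauchySeq_tendsto_of_complete hcauchy
  -- z is a fixed point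
  have hTz : T z = z := by
    have h1 : Tendsto (fun n => T (T^[n] x0)) atTop (𝓝 (T z)) := (hTc.tendsto z).comp hz
    have h2 : Tendsto (fun n => T (T^[n] x0)) atTop (𝓝 z) := by
      have := hz.comp (tendsto_add_atTop_nat 1)
      simpa [Function.comp_def, Function.iterate_succ_apply'] using this
    exact tendsto_nhds_unique h1 h2
  -- convergence of all orbits
  have hconv_all : ∀ x : X, Tendsto (fun n : ℕ => T^[n] x) atTop (𝓝 z) := by
    intro x
    rw [tendsto_iff_dist_tendsto_zero]
    have hle : ∀ n : ℕ, dist (T^[n] x) z ≤ dist (T^[n] x) (T^[n] x0) + dist (T^[n] x0) z :=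
      fun n => dist_triangle _ _ _
    have h2 : Tendsto (fun n => dist (T^[n] x0) z) atTop (𝓝 0) :=
      tendsto_iff_dist_tendsto_zero.mp hz
    have hsum : Tendsto (fun n => dist (T^[n] x) (T^[n] x0) + dist (T^[n] x0) z)
        atTop (𝓝 0) := by simpa using (approach x x0).add h2
    exact squeeze_zero (fun n => dist_nonneg) hle hsum
  refine ⟨z, hTz, ?_, hconv_all⟩
  intro w hw
  have hfix : ∀ n : ℕ, T^[n] w = w := fun n => Function.iterate_fixed hw n
  have := hconv_all w
  simp only [hfix] at this
  exact (tendsto_nhds_unique tendsto_const_nhds this)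
end

section
/- Let g : [0,∞) → [0,∞) be nondecreasing and right continuous with g(t) < t for all t > 0, and let (d_n) be a bounded sequence of nonnegative real numbers such that limsup_{k→∞} d_k ≤ g(max{d_n, d_{n+1}}) for every n ≥ 0. Then d_n → 0 as n → ∞. -/
open Filter Topology

/-- If `g : [0,∞) → [0,∞)` is nondecreasing and right continuous with `g(t) < t` for
`t > 0`, and `(d_n)` is a bounded nonnegative sequence with
`limsup_k d_k ≤ g(max{d_n, d_{n+1}})` for every `n ≥ 0`, then `d_n → 0`. -/
theorem tendsto_zero_of_limsup_bound (g : ℝ → ℝ)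
    (hg0 : ∀ t, 0 ≤ t → 0 ≤ g t)
    (hgmono : MonotoneOn g (Set.Ici 0))
    (hgrc : ∀ t₀ : ℝ, 0 ≤ t₀ → Tendsto g (𝓝[>] t₀) (𝓝 (g t₀)))
    (hglt : ∀ t, 0 < t → g t < t)
    (d : ℕ → ℝ) (hd0 : ∀ n, 0 ≤ d n) (hdbdd : ∃ C : ℝ, ∀ n, d n ≤ C)
    (hrec : ∀ n : ℕ, limsup d atTop ≤ g (max (d n) (d (n + 1)))) :
    Tendsto d atTop (𝓝 0) := by
  obtain ⟨C, hC⟩ := hdbdd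
  have hub : IsBoundedUnder (· ≤ ·) atTop d := isBoundedUnder_of ⟨C, hC⟩
  have hlb : IsBoundedUnder (· ≥ ·) atTop d := isBoundedUnder_of ⟨0, hd0⟩
  have hcb : IsCoboundedUnder (· ≤ ·) atTop d := hlb.isCoboundedUnder_le
  set L := limsup d atTop with hL
  have hL0 : 0 ≤ L := le_limsup_of_frequently_le (Frequently.of_forall hd0) hub
  -- limsup of max (d n) (d (n+1)) is L
  have hub' : IsBoundedUnder (· ≤ ·) atTop (fun n => d (n + 1)) :=
    isBoundedUnder_of ⟨C, fun n => hC _⟩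
  have hcb' : IsCoboundedUnder (· ≤ ·) atTop (fun n => d (n + 1)) :=
    IsBoundedUnder.isCoboundedUnder_le (isBoundedUnder_of ⟨0, fun n => hd0 _⟩)
  have hmax : limsup (fun n => max (d n) (d (n + 1))) atTop = L := by
    rw [limsup_max hcb hcb' hub hub', limsup_nat_add d 1, max_self]
  -- For every ε > 0, L ≤ g (L + ε)
  have key : ∀ t, L < t → L ≤ g t := by
    intro t ht
    have : limsup (fun n => max (d n) (d (n + 1))) atTop < t := by rw [hmax]; exact ht
    obtain ⟨n, hn⟩ := (eventually_lt_of_limsup_lt this (hub.sup hub')).exists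
    calc L ≤ g (max (d n) (d (n + 1))) := hrec n
      _ ≤ g t := hgmono (Set.mem_Ici.2 (le_max_of_le_left (hd0 n)))
        (Set.mem_Ici.2 (le_trans (le_max_of_le_left (hd0 n)) hn.le)) hn.le
  have hLg : L ≤ g L := by
    have hne : (𝓝[>] L).NeBot := nhdsGT_neBot L
    exact ge_of_tendsto (hgrc L hL0) (eventually_nhdsWithin_of_forall fun t ht => key t ht)
  have hL0' : L = 0 := by
    rcases hL0.lt_or_eq with h | h
    · exact absurd hLg (not_le.2 (hglt L h))
    · exact h.symm
  have hliminf : liminf d atTop = 0 :=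
    le_antisymm (hL0' ▸ liminf_le_limsup hub hlb) (le_liminf_of_le hub.isCoboundedUnder_ge (Eventually.of_forall hd0))
  exact tendsto_of_liminf_eq_limsup hliminf hL0' hub hlb
end
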